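/- Suppose S = ⟨C, ≺, g⟩ is a pseudo-distance on 𝒱 such that V |_S W = V | W for all V, W ⊆ 𝒱, where | is the modified Hamster-Wheel operator. Then g(v_m, w_m) ≺ g(v₁, w₁). -/

import Mathlib

/-- `lt` is a strict total order on `C`. -/
def StrictTotalOrder' {C : Type*} (lt : C → C → Prop) : Prop :=
  (∀ c, ¬ lt c c) ∧ (∀ a b c, lt a b → lt b c → lt a c) ∧
  (∀ a b, a ≠ b → lt a b ∨ lt b a)

/-- The operator induced by a pseudo-distance `⟨C, lt, d⟩`:
`V |_D W = {w ∈ W : ∃ v ∈ V, ∀ v' ∈ V, ∀ w' ∈ W, d(v,w) ⪯ d(v',w')}`. -/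
def inducedOp {𝒱 C : Type*} (lt : C → C → Prop) (d : 𝒱 → 𝒱 → C)
    (A B : Set 𝒱) : Set 𝒱 :=
  {w ∈ B | ∃ v ∈ A, ∀ v' ∈ A, ∀ w' ∈ B, lt (d v w) (d v' w') ∨ d v w = d v' w'}

/-- The elements `v 1, …, v m, w 1, …, w m` are `2m` pairwise distinct elements. -/
def hwDistinct {𝒱 : Type*} (m : ℕ) (v w : ℕ → 𝒱) : Prop :=
  (∀ i ∈ Set.Icc 1 m, ∀ j ∈ Set.Icc 1 m, v i ≠ w j) ∧
  (∀ i ∈ Set.Icc 1 m, ∀ j ∈ Set.Icc 1 m, v i = v j → i = j) ∧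
  (∀ i ∈ Set.Icc 1 m, ∀ j ∈ Set.Icc 1 m, w i = w j → i = j)

/-- `X = {v 1, …, v m, w 1, …, w m}`. -/
def hwX {𝒱 : Type*} (m : ℕ) (v w : ℕ → 𝒱) : Set 𝒱 :=
  {x | ∃ i ∈ Set.Icc 1 m, x = v i ∨ x = w i}

open Classical in
/-- The Hamster-Wheel pseudo-distance `d : 𝒱 × 𝒱 → ℝ`. -/
noncomputable def hwD {𝒱 : Type*} (m : ℕ) (v w : ℕ → 𝒱) (a b : 𝒱) : ℝ :=
  if a = b then 0
  else if ¬ (({a, b} : Set 𝒱) ⊆ hwX m v w) then 1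
  else if (∃ i ∈ Set.Icc 1 m, ∃ j ∈ Set.Icc 1 m, a = v i ∧ b = v j) ∨
      (∃ i ∈ Set.Icc 1 m, ∃ j ∈ Set.Icc 1 m, a = w i ∧ b = w j) then 1.1
  else if ∃ i ∈ Set.Icc 1 m, ({a, b} : Set 𝒱) = {v i, w i} then 1.4
  else if ∃ i ∈ Set.Icc 1 m, ∃ j ∈ Set.Icc 1 m,
      ({a, b} : Set 𝒱) = {v i, w j} ∧ ((i : ℤ) - j).natAbs ∈ ({1, m - 1} : Set ℕ) then 2
  else 1.2

open Classical in
/-- The modified Hamster-Wheel operator `|` on `𝒫(𝒱)`. -/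
noncomputable def hwOp {𝒱 : Type*} (m : ℕ) (v w : ℕ → 𝒱) (A B : Set 𝒱) : Set 𝒱 :=
  if A = ({v m, v 1} : Set 𝒱) ∧ B = ({w m, w 1} : Set 𝒱) then {w m}
  else if A = ({w m, w 1} : Set 𝒱) ∧ B = ({v m, v 1} : Set 𝒱) then {v m}
  else inducedOp (· < ·) (hwD m v w) A B


/- In the Hamster-Wheel distance `d(v_1, w_1) = 1.4 < 2 = d(v_1, w_m)`, so `{v_1} | {w_m, w_1} = {w_1}`,
and since `g` induces the same operator, `g(v_1, w_1) ≺ g(v_1, w_m)`. The modified value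
`{v_m, v_1} | {w_m, w_1} = {w_m}` says that some `g(x, w_m)` with `x ∈ {v_m, v_1}` is minimal among the
four values `g(v_i, w_j)`, `i, j ∈ {1, m}`. It cannot be `g(v_1, w_m)`, so `g(v_m, w_m)` is minimal; and
it cannot equal `g(v_1, w_1)`, for then `w_1` would be selected as well. -/

namespace StrictTotalOrder'

variable {C : Type*} {lt : C → C → Prop}

lemma lt_or_eq_of_not_lt (h : StrictTotalOrder' lt) {a b : C} (hab : ¬ lt a b) :
    lt b a ∨ b = a := by
  rcases eq_or_ne b a with hba | hba
  · exact Or.inr hba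
  · exact Or.inl ((h.2.2 b a hba).resolve_right hab)

lemma not_lt_or_eq_of_lt (h : StrictTotalOrder' lt) {a b : C} (hab : lt a b) :
    ¬ (lt b a ∨ b = a) := by
  rintro (hba | rfl)
  · exact h.1 a (h.2.1 a b a hab hba)
  · exact h.1 b hab

end StrictTotalOrder'

section InducedOp

variable {𝒱 C : Type*}

lemma mem_inducedOp_singleton {lt : C → C → Prop} {g : 𝒱 → 𝒱 → C} {x y : 𝒱} {B : Set 𝒱} :
    y ∈ inducedOp lt g {x} B ↔ y ∈ B ∧ ∀ y' ∈ B, lt (g x y) (g x y') ∨ g x y = g x y' := by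
  simp [inducedOp]

lemma lt_of_notMem_inducedOp_singleton_pair {lt : C → C → Prop} (hsto : StrictTotalOrder' lt)
    {g : 𝒱 → 𝒱 → C} {x y z : 𝒱} (h : y ∉ inducedOp lt g {x} {y, z}) : lt (g x z) (g x y) := by
  by_contra hzy
  refine h (mem_inducedOp_singleton.2 ⟨Set.mem_insert y {z}, ?_⟩)
  rintro y' (rfl | rfl)
  · exact Or.inr rfl
  · exact hsto.lt_or_eq_of_not_lt hzy

lemma notMem_inducedOp_singleton_of_lt [LinearOrder C] {d : 𝒱 → 𝒱 → C} {x y z : 𝒱}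
    {B : Set 𝒱} (hy : y ∈ B) (hyz : d x y < d x z) : z ∉ inducedOp (· < ·) d {x} B := by
  intro hz
  rcases (mem_inducedOp_singleton.1 hz).2 y hy with hlt | heq
  · exact hlt.asymm hyz
  · exact hyz.ne' heq

lemma lt_of_inducedOp_pair_eq_singleton {lt : C → C → Prop} (hsto : StrictTotalOrder' lt)
    {g : 𝒱 → 𝒱 → C} {x x' y y' : 𝒱} (hyy' : y ≠ y')
    (hsel : inducedOp lt g {x, x'} {y, y'} = {y}) (hx' : lt (g x' y') (g x' y)) :
    lt (g x y) (g x' y') := by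
  have hy : y ∈ inducedOp lt g {x, x'} {y, y'} := hsel ▸ rfl
  obtain ⟨-, x₀, hx₀, hmin⟩ := hy
  rcases hx₀ with rfl | rfl
  · refine (hmin x' (Set.mem_insert_of_mem _ rfl) y' (Set.mem_insert_of_mem _ rfl)).resolve_right
      fun heq => hyy' ?_
    have hy' : y' ∈ inducedOp lt g {x₀, x'} {y, y'} :=
      ⟨Set.mem_insert_of_mem _ rfl, x', Set.mem_insert_of_mem _ rfl, heq ▸ hmin⟩
    exact (hsel ▸ hy' : y' ∈ ({y} : Set 𝒱)).symm
  · exact absurd (hmin x₀ (Set.mem_insert_of_mem _ rfl) y' (Set.mem_insert_of_mem _ rfl))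
      (hsto.not_lt_or_eq_of_lt hx')

end InducedOp

section HamsterWheel

variable {𝒱 : Type*} {m : ℕ} {v w : ℕ → 𝒱}

lemma hwD_v_w (hdist : hwDistinct m v w) {i j : ℕ} (hi : i ∈ Set.Icc 1 m)
    (hj : j ∈ Set.Icc 1 m) :
    hwD m v w (v i) (w j) =
      if i = j then 1.4
      else if ((i : ℤ) - j).natAbs ∈ ({1, m - 1} : Set ℕ) then 2 else 1.2 := by
  obtain ⟨hvw, hvv, hww⟩ := hdist
  have hsub : ({v i, w j} : Set 𝒱) ⊆ hwX m v w := by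
    rintro x (rfl | rfl)
    · exact ⟨i, hi, Or.inl rfl⟩
    · exact ⟨j, hj, Or.inr rfl⟩
  have hmixed : ¬ ((∃ i' ∈ Set.Icc 1 m, ∃ j' ∈ Set.Icc 1 m, v i = v i' ∧ w j = v j') ∨
      (∃ i' ∈ Set.Icc 1 m, ∃ j' ∈ Set.Icc 1 m, v i = w i' ∧ w j = w j')) := by
    rintro (⟨i', -, j', hj', -, h⟩ | ⟨i', hi', j', -, h, -⟩)
    · exact hvw j' hj' j hj h.symm
    · exact hvw i hi i' hi' h
  have hpair : ∀ k ∈ Set.Icc 1 m, ∀ l ∈ Set.Icc 1 m,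
      ({v i, w j} : Set 𝒱) = {v k, w l} → i = k ∧ j = l := by
    intro k hk l hl hset
    rcases Set.pair_eq_pair_iff.1 hset with ⟨hik, hjl⟩ | ⟨hil, -⟩
    · exact ⟨hvv i hi k hk hik, hww j hj l hl hjl⟩
    · exact absurd hil (hvw i hi l hl)
  unfold hwD
  rw [if_neg (hvw i hi j hj), if_neg (not_not_intro hsub), if_neg hmixed]
  by_cases hij : i = j
  · subst hij
    rw [if_pos ⟨i, hi, rfl⟩, if_pos rfl]
  rw [if_neg, if_neg hij]
  · by_cases hadj : ((i : ℤ) - j).natAbs ∈ ({1, m - 1} : Set ℕ)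
    · rw [if_pos ⟨i, hi, j, hj, rfl, hadj⟩, if_pos hadj]
    rw [if_neg, if_neg hadj]
    rintro ⟨k, hk, l, hl, hset, hadj'⟩
    obtain ⟨rfl, rfl⟩ := hpair k hk l hl hset
    exact hadj hadj'
  · rintro ⟨k, hk, hset⟩
    obtain ⟨rfl, rfl⟩ := hpair k hk k hk hset
    exact hij rfl

lemma hwOp_singleton {x : 𝒱} {B : Set 𝒱} (hv : v m ≠ v 1) (hxw : x ≠ w m) :
    hwOp m v w {x} B = inducedOp (· < ·) (hwD m v w) {x} B := by
  have hpair {a b : 𝒱} (h : ({x} : Set 𝒱) = {a, b}) : a = x ∧ b = x :=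
    ⟨h.symm.subset (Set.mem_insert a {b}), h.symm.subset (Set.mem_insert_of_mem a rfl)⟩
  unfold hwOp
  rw [if_neg fun h => hv ((hpair h.1).1.trans (hpair h.1).2.symm),
    if_neg fun h => hxw (hpair h.1).1.symm]

end HamsterWheel

theorem stmt6_general {𝒱 : Type*} (m : ℕ) (hm : 4 ≤ m) (v w : ℕ → 𝒱)
    (hdist : hwDistinct m v w)
    {C : Type*} (lt : C → C → Prop) (g : 𝒱 → 𝒱 → C)
    (hsto : StrictTotalOrder' lt)
    (heq : ∀ A B : Set 𝒱, inducedOp lt g A B = hwOp m v w A B) :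
    lt (g (v m) (w m)) (g (v 1) (w 1)) := by
  have h1 : (1 : ℕ) ∈ Set.Icc 1 m := ⟨le_rfl, by omega⟩
  have hm' : m ∈ Set.Icc 1 m := ⟨by omega, le_rfl⟩
  have hv : v m ≠ v 1 := fun h => by have := hdist.2.1 m hm' 1 h1 h; omega
  have hw : w m ≠ w 1 := fun h => by have := hdist.2.2 m hm' 1 h1 h; omega
  have hd_lt : hwD m v w (v 1) (w 1) < hwD m v w (v 1) (w m) := by
    rw [hwD_v_w hdist h1 h1, hwD_v_w hdist h1 hm', if_pos rfl, if_neg (by omega), if_pos]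
    · norm_num
    · right; simp only [Set.mem_singleton_iff]; omega
  have hv1 : lt (g (v 1) (w 1)) (g (v 1) (w m)) := by
    refine lt_of_notMem_inducedOp_singleton_pair hsto ?_
    rw [heq, hwOp_singleton hv (hdist.1 1 h1 m hm')]
    exact notMem_inducedOp_singleton_of_lt (Set.mem_insert_of_mem _ rfl) hd_lt
  have hsel : inducedOp lt g {v m, v 1} {w m, w 1} = {w m} := by
    rw [heq, hwOp, if_pos ⟨rfl, rfl⟩]
  exact lt_of_inducedOp_pair_eq_singleton hsto hw hsel hv1

/-- If a pseudo-distance `⟨C, lt, g⟩` induces the modified Hamster-Wheel operator, then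
`g(v_m, w_m) ≺ g(v_1, w_1)`. -/
theorem stmt6 {𝒱 : Type*} (m : ℕ) (hm : 4 ≤ m) (v w : ℕ → 𝒱)
    (hdist : hwDistinct m v w)
    {C : Type*} (lt : C → C → Prop) (g : 𝒱 → 𝒱 → C)
    (hne : Nonempty C) (hsto : StrictTotalOrder' lt)
    (heq : ∀ A B : Set 𝒱, inducedOp lt g A B = hwOp m v w A B) :
    lt (g (v m) (w m)) (g (v 1) (w 1)) :=
  stmt6_general m hm v w hdist lt g hsto heq
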